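/- Let a ∈ ℂ, a ≠ 0, and let V be the Mathieu Fourier coefficients. For every integer n ≥ 2, every z ∈ ℂ with |z| ≤ 1, and every integer k ≥ 1, one has A_{2k}(n,z) = 0. -/

import Mathlib

/-!
Every nonzero term of `A_p(n,z)` comes from a walk `n = j₀, j₁, …, j_p, j_{p+1} = n` whose
`p + 1` steps are all `±2`. Each such step is `2` modulo `4`, so a closed walk of this kind has
`2 (p + 1) ≡ 0 (mod 4)`, i.e. `p` is odd. Hence every term of `A_{2k}(n,z)` vanishes.
-/

open Complex

/-- Extended walk: `extWalk b e k j i` equals `b` for `i = 0`, `j (i-1)` for `1 ≤ i ≤ k`,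
and `e` for `i > k`. -/
def extWalk (b e : ℤ) (k : ℕ) (j : Fin k → ℤ) : ℕ → ℤ := fun i =>
  if h : 1 ≤ i ∧ i ≤ k then j ⟨i - 1, by omega⟩ else if i = 0 then b else e

/-- Generic term of the sums `S_k^{ij}(n,z)`: for a `k`-tuple `j` of integers avoiding `±n`,
the value `V(j₁ - b) V(j₂ - j₁) ⋯ V(j_k - j_{k-1}) V(e - j_k) / ∏_s (n² - j_s² + z)`. -/
noncomputable def Sterm (V : ℤ → ℂ) (n : ℕ) (z : ℂ) (b e : ℤ) (k : ℕ)
    (j : Fin k → {m : ℤ // m ≠ (n : ℤ) ∧ m ≠ -(n : ℤ)}) : ℂ :=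
  (∏ i ∈ Finset.range (k + 1),
      V (extWalk b e k (fun s => (j s : ℤ)) (i + 1) - extWalk b e k (fun s => (j s : ℤ)) i)) /
    ∏ s : Fin k, ((n : ℂ) ^ 2 - ((j s : ℤ) : ℂ) ^ 2 + z)

/-- The Mathieu Fourier coefficients: `V(2) = V(-2) = a` and `V(m) = 0` for `m ≠ ±2`. -/
noncomputable def mathieuV (a : ℂ) : ℤ → ℂ := fun m => if m = 2 ∨ m = -2 then a else 0

/-- `A_p(n,z)` for the Mathieu potential: the sum over `p`-tuples `(j₁,…,j_p)` of integers
avoiding `±n` of `V(-n+j₁) V(j₂-j₁) ⋯ V(j_p-j_{p-1}) V(n-j_p) / ∏_s (n²-j_s²+z)`. -/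
noncomputable def Acoef (a : ℂ) (n : ℕ) (z : ℂ) (p : ℕ) : ℂ :=
  ∑' j : Fin p → {m : ℤ // m ≠ (n : ℤ) ∧ m ≠ -(n : ℤ)},
    Sterm (mathieuV a) n z (n : ℤ) (n : ℤ) p j

theorem sub_modEq_two_mul_of_steps_eq_two_or_neg_two {g : ℕ → ℤ} {p : ℕ}
    (hstep : ∀ i < p, g (i + 1) - g i = 2 ∨ g (i + 1) - g i = -2) :
    g p - g 0 ≡ 2 * p [ZMOD 4] := by
  induction p with
  | zero => simp
  | succ p ih =>
    have hprev := Int.modEq_iff_dvd.mp (ih fun i hi => hstep i (by omega))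
    rw [Int.modEq_iff_dvd]
    push_cast
    rcases hstep p (by omega) with hs | hs <;> omega

theorem even_of_closed_walk_steps_eq_two_or_neg_two {g : ℕ → ℤ} {p : ℕ}
    (hstep : ∀ i < p, g (i + 1) - g i = 2 ∨ g (i + 1) - g i = -2) (hclosed : g p = g 0) :
    Even p := by
  have h := Int.modEq_iff_dvd.mp (sub_modEq_two_mul_of_steps_eq_two_or_neg_two hstep)
  rw [hclosed] at h
  rw [Nat.even_iff]
  omega

@[simp]
theorem extWalk_zero (b e : ℤ) (k : ℕ) (j : Fin k → ℤ) : extWalk b e k j 0 = b := by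
  simp [extWalk]

@[simp]
theorem extWalk_succ_self (b e : ℤ) (k : ℕ) (j : Fin k → ℤ) : extWalk b e k j (k + 1) = e := by
  simp [extWalk]

theorem Sterm_eq_zero_of_even {V : ℤ → ℂ} (hV : ∀ m, V m ≠ 0 → m = 2 ∨ m = -2) (n : ℕ) (z : ℂ)
    (b : ℤ) {k : ℕ} (hk : Even k) (j : Fin k → {m : ℤ // m ≠ (n : ℤ) ∧ m ≠ -(n : ℤ)}) :
    Sterm V n z b b k j = 0 := by
  rw [Sterm, div_eq_zero_iff]
  left
  by_contra hprod
  set g := extWalk b b k (fun s => (j s : ℤ))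
  have hstep : ∀ i < k + 1, g (i + 1) - g i = 2 ∨ g (i + 1) - g i = -2 := fun i hi =>
    hV _ (Finset.prod_ne_zero_iff.mp hprod i (Finset.mem_range.mpr hi))
  have hclosed : g (k + 1) = g 0 := by simp [g]
  exact Nat.not_even_iff_odd.mpr hk.add_one
    (even_of_closed_walk_steps_eq_two_or_neg_two hstep hclosed)

theorem eq_two_or_neg_two_of_mathieuV_ne_zero (a : ℂ) (m : ℤ) (h : mathieuV a m ≠ 0) :
    m = 2 ∨ m = -2 := by
  by_contra hm
  exact h (if_neg hm)

theorem mathieu_stmt_7_general (a : ℂ) (n : ℕ) (z : ℂ) (k : ℕ) :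
    Acoef a n z (2 * k) = 0 := by
  simp only [Acoef, tsum_zero,
    Sterm_eq_zero_of_even (eq_two_or_neg_two_of_mathieuV_ne_zero a) n z n (even_two_mul k)]

/-- For the Mathieu potential, `A_{2k}(n,z) = 0` for every `k ≥ 1`. -/
theorem mathieu_stmt_7 (a : ℂ) (ha : a ≠ 0) (n : ℕ) (hn : 2 ≤ n) (z : ℂ) (hz : ‖z‖ ≤ 1)
    (k : ℕ) (hk : 1 ≤ k) :
    Acoef a n z (2 * k) = 0 :=
  mathieu_stmt_7_general a n z k
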